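/- Let x ∈ 𝔐 be self-adjoint with median m, and set x̂ := x ⊗ 1 − 1 ⊗ x in 𝔐 ⊗ 𝔐 with trace τ ⊗ τ. Then for every λ ∈ ℝ and every α ∈ ℝ, τ(e_λ^⊥(|x − m|)) ≤ 2 (τ ⊗ τ)(e_λ^⊥(|x̂|)) ≤ 4 τ(e_{λ/2}^⊥(|x − α|)). In particular, taking α = m, τ(e_λ^⊥(|x − m|)) ≤ 2 (τ ⊗ τ)(e_λ^⊥(|x̂|)) ≤ 4 τ(e_{λ/2}^⊥(|x − m|)). -/

import Mathlib

open scoped NNReal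

/-- A *quantum probability space*: a von Neumann algebra `M` (presented as a unital
C⋆-algebra; the weak closure properties that we use are recorded explicitly as axioms
below) together with a normal faithful tracial state `τ` and, for every self-adjoint
element `x` and every Borel set `B ⊆ ℝ`, the spectral projection `specProj x B = E_x(B)`
coming from the spectral resolution `x = ∫ λ dE_x(λ)`. -/
structure QuantumProbabilitySpace (M : Type*) [CStarAlgebra M] [PartialOrder M]
    [StarOrderedRing M] where
  /-- the state -/
  τ : M →ₗ[ℂ] ℂ
  tracial : ∀ a b : M, τ (a * b) = τ (b * a)
  normalized : τ 1 = 1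
  pos : ∀ a : M, 0 ≤ a → 0 ≤ (τ a).re ∧ (τ a).im = 0
  faithful : ∀ a : M, 0 ≤ a → τ a = 0 → a = 0
  /-- spectral projections of self-adjoint elements -/
  specProj : M → Set ℝ → M
  specProj_isIdempotentElem : ∀ (x : M) (B : Set ℝ), IsSelfAdjoint x → MeasurableSet B →
    IsIdempotentElem (specProj x B)
  specProj_isSelfAdjoint : ∀ (x : M) (B : Set ℝ), IsSelfAdjoint x → MeasurableSet B →
    IsSelfAdjoint (specProj x B)
  specProj_univ : ∀ x : M, IsSelfAdjoint x → specProj x Set.univ = 1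
  specProj_inter : ∀ (x : M) (B C : Set ℝ), IsSelfAdjoint x → MeasurableSet B →
    MeasurableSet C → specProj x (B ∩ C) = specProj x B * specProj x C
  /-- normality of the state: the spectral distribution is countably additive -/
  specProj_iUnion : ∀ (x : M) (B : ℕ → Set ℝ), IsSelfAdjoint x → (∀ n, MeasurableSet (B n)) →
    Pairwise (Function.onFun Disjoint B) →
    HasSum (fun n => τ (specProj x (B n))) (τ (specProj x (⋃ n, B n)))
  specProj_commute : ∀ (x : M) (B : Set ℝ), IsSelfAdjoint x → MeasurableSet B →
    Commute x (specProj x B)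
  /-- the spectral measure is supported on the spectrum -/
  specProj_spectrum : ∀ (x : M) (B : Set ℝ), IsSelfAdjoint x → MeasurableSet B →
    specProj x B = specProj x (B ∩ spectrum ℝ x)
  /-- `x` compressed to `E_x((-∞, t])` is at most `t` -/
  specProj_le : ∀ (x : M) (t : ℝ), IsSelfAdjoint x →
    specProj x (Set.Iic t) * x * specProj x (Set.Iic t) ≤ (t : ℂ) • specProj x (Set.Iic t)
  /-- `x` compressed to `E_x([t, ∞))` is at least `t` -/
  specProj_ge : ∀ (x : M) (t : ℝ), IsSelfAdjoint x →
    (t : ℂ) • specProj x (Set.Ici t) ≤ specProj x (Set.Ici t) * x * specProj x (Set.Ici t)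
  /-- compatibility with the functional calculus: `E_{f(x)}(B) = E_x(f⁻¹(B))` -/
  specProj_cfc : ∀ (x : M) (f : ℝ → ℝ) (B : Set ℝ), IsSelfAdjoint x → Continuous f →
    MeasurableSet B → specProj (cfc f x) B = specProj x (f ⁻¹' B)
  /-- the spectral distribution of a (bounded) self-adjoint element is determined by
  its moments -/
  moments_determine : ∀ x y : M, IsSelfAdjoint x → IsSelfAdjoint y →
    (∀ n : ℕ, τ (x ^ n) = τ (y ^ n)) →
    ∀ B : Set ℝ, MeasurableSet B → τ (specProj x B) = τ (specProj y B)

/-- a projection in a von Neumann algebra: a self-adjoint idempotent -/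
def IsProjection {M : Type*} [CStarAlgebra M] [PartialOrder M] [StarOrderedRing M]
    (p : M) : Prop := IsSelfAdjoint p ∧ IsIdempotentElem p

/-- `r` is the supremum `⋁ F` of a family `F` of projections in the lattice of
projections of a von Neumann algebra -/
def IsSupProjection {M : Type*} [CStarAlgebra M] [PartialOrder M] [StarOrderedRing M]
    (F : Set M) (r : M) : Prop :=
  IsProjection r ∧ (∀ p ∈ F, p * r = p) ∧
    ∀ s : M, IsProjection s → (∀ p ∈ F, p * s = p) → r * s = r

/-- the absolute value `|x| = (x⋆x)^{1/2}` of an element of a C⋆-algebra -/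
noncomputable def qAbs {M : Type*} [CStarAlgebra M] [PartialOrder M] [StarOrderedRing M]
    (x : M) : M := CFC.sqrt (star x * x)

namespace QuantumProbabilitySpace

variable {M : Type*} [CStarAlgebra M] [PartialOrder M] [StarOrderedRing M]
variable (Q : QuantumProbabilitySpace M)

/-- the spectral distribution `B ↦ τ(E_x(B))` of a self-adjoint `x` -/
noncomputable def prob (x : M) (B : Set ℝ) : ℝ := (Q.τ (Q.specProj x B)).re

/-- `m` is a median of the self-adjoint element `x`:
`τ(e_{(-∞, m]}(x)) ≥ 1/2` and `τ(e_m^⊥(x)) = τ(e_{[m, ∞)}(x)) ≥ 1/2`. -/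
def IsMedian (x : M) (m : ℝ) : Prop :=
  1 / 2 ≤ Q.prob x (Set.Iic m) ∧ 1 / 2 ≤ Q.prob x (Set.Ici m)

/-- two self-adjoint random variables are identically distributed if their spectral
distributions coincide -/
def IdentDistrib (x y : M) : Prop :=
  ∀ B : Set ℝ, MeasurableSet B → Q.τ (Q.specProj x B) = Q.τ (Q.specProj y B)

/-- a self-adjoint random variable is symmetric if `x` and `-x` are identically
distributed -/
def IsSymmetric (x : M) : Prop := Q.IdentDistrib x (-x)

/-- the von Neumann subalgebra `W*(S)` generated by a set `S`: the smallest subset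
containing `S` which is a unital star subalgebra closed under taking spectral
projections (the abstract surrogate for weak closedness). -/
def wstar (S : Set M) : Set M :=
  ⋂₀ {A : Set M | S ⊆ A ∧ (1 : M) ∈ A ∧ (∀ a ∈ A, ∀ b ∈ A, a + b ∈ A) ∧
    (∀ a ∈ A, ∀ b ∈ A, a * b ∈ A) ∧ (∀ (c : ℂ), ∀ a ∈ A, c • a ∈ A) ∧
    (∀ a ∈ A, star a ∈ A) ∧
    (∀ a ∈ A, ∀ B : Set ℝ, MeasurableSet B → Q.specProj a B ∈ A)}

/-- the `p`-th power `‖x‖_p^p = τ(|x|^p)` of the noncommutative `L_p`-norm -/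
noncomputable def lpNormPow (x : M) (p : ℝ) : ℝ := (Q.τ (CFC.rpow (qAbs x) p)).re

end QuantumProbabilitySpace

/-- A realization of the von Neumann tensor product `M ⊗ M`: a quantum probability
space `(N, R.τ)` together with two unital trace-commuting ⋆-embeddings
`ι₁ : x ↦ x ⊗ 1` and `ι₂ : x ↦ 1 ⊗ x` whose ranges commute, such that the trace is
multiplicative on products, `(τ ⊗ τ)((a ⊗ 1)(1 ⊗ b)) = τ(a) τ(b)` (tensor
independence of the two copies), and which are compatible with spectral
projections (i.e. are normal). -/
structure QuantumProbabilitySpace.IsTensorSquare {M N : Type*}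
    [CStarAlgebra M] [PartialOrder M] [StarOrderedRing M]
    [CStarAlgebra N] [PartialOrder N] [StarOrderedRing N]
    (Q : QuantumProbabilitySpace M) (R : QuantumProbabilitySpace N)
    (i1 i2 : M →⋆ₐ[ℂ] N) : Prop where
  commutes : ∀ a b : M, Commute (i1 a) (i2 b)
  trace_mul : ∀ a b : M, R.τ (i1 a * i2 b) = Q.τ a * Q.τ b
  specProj_fst : ∀ (a : M) (B : Set ℝ), IsSelfAdjoint a → MeasurableSet B →
    R.specProj (i1 a) B = i1 (Q.specProj a B)
  specProj_snd : ∀ (a : M) (B : Set ℝ), IsSelfAdjoint a → MeasurableSet B →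
    R.specProj (i2 a) B = i2 (Q.specProj a B)

/-!
The spectral distribution `B ↦ τ(E_x(B))` is a probability measure, and the key operator fact
is that a projection `r` commuting with `y` on which `y ≥ l` is orthogonal to `E_y((-∞, b])` for
every `b < l` (a trace squeeze plus faithfulness), whence `τ(r) ≤ τ(E_y([l, ∞)))`.

For the left inequality take `r = E_x([m + λ, ∞)) ⊗ E_x((-∞, m])`, on which `x̂ ≥ λ`, and the
mirror projection on which `x̂ ≤ -λ`; their traces are products in which the median factor is at
least `1/2`. For the right inequality, `g = c ⊗ c` with `c = E_x([α - λ/2 + ε, α + λ/2 - ε])`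
satisfies `|x̂| < λ` on `g`, so `g ⊥ e_λ^⊥(|x̂|)` and
`τ(e_λ^⊥(|x̂|)) ≤ 1 - τ(c)² ≤ 2 (1 - τ(c))`; let `ε → 0`.
-/

open Set Filter MeasureTheory Topology

section

variable {M N : Type*} [CStarAlgebra M] [PartialOrder M] [StarOrderedRing M]
  [CStarAlgebra N] [PartialOrder N] [StarOrderedRing N]

namespace IsProjection

variable {p q : M}

lemma nonneg (hp : IsProjection p) : 0 ≤ p := by
  simpa [hp.1.star_eq, hp.2.eq] using star_mul_self_nonneg p

lemma one_sub (hp : IsProjection p) : IsProjection (1 - p) :=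
  ⟨(IsSelfAdjoint.one M).sub hp.1, hp.2.one_sub⟩

lemma map (hp : IsProjection p) (i : M →⋆ₐ[ℂ] N) : IsProjection (i p) :=
  ⟨hp.1.map i, hp.2.map i⟩

lemma mul_of_commute (hp : IsProjection p) (hq : IsProjection q) (h : Commute p q) :
    IsProjection (p * q) :=
  ⟨(hp.1.commute_iff hq.1).mp h, hp.2.mul_of_commute h hq.2⟩

lemma mul_eq_zero_symm (hp : IsProjection p) (hq : IsProjection q) (h : p * q = 0) :
    q * p = 0 := by
  simpa [hp.1.star_eq, hq.1.star_eq] using congrArg star h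

lemma add (hp : IsProjection p) (hq : IsProjection q) (h : p * q = 0) :
    IsProjection (p + q) := by
  refine ⟨hp.1.add hq.1, ?_⟩
  have h' := hp.mul_eq_zero_symm hq h
  calc (p + q) * (p + q) = p * p + q * q + p * q + q * p := by noncomm_ring
    _ = p + q := by rw [hp.2.eq, hq.2.eq, h, h', add_zero, add_zero]

lemma sub_of_mul_eq (hp : IsProjection p) (hq : IsProjection q) (h : p * q = q) :
    IsProjection (p - q) := by
  refine ⟨hp.1.sub hq.1, ?_⟩
  have h' : q * p = q := by simpa [hp.1.star_eq, hq.1.star_eq] using congrArg star h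
  calc (p - q) * (p - q) = p * p - p * q - q * p + q * q := by noncomm_ring
    _ = p - q := by rw [hp.2.eq, hq.2.eq, h, h']; abel

end IsProjection

lemma mul_le_mul_right_of_commute {a b q : M} (h : a ≤ b) (hq : 0 ≤ q) (ha : Commute a q)
    (hb : Commute b q) : a * q ≤ b * q := by
  simpa [sub_mul] using Commute.mul_nonneg (sub_nonneg.2 h) hq (hb.sub_left ha)

namespace QuantumProbabilitySpace

variable (Q : QuantumProbabilitySpace M) {a b p q y : M}

lemma re_trace_nonneg (ha : 0 ≤ a) : 0 ≤ (Q.τ a).re := (Q.pos a ha).1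

lemma ofReal_re_trace (ha : 0 ≤ a) : ((Q.τ a).re : ℂ) = Q.τ a :=
  Complex.ext rfl (Q.pos a ha).2.symm

lemma re_trace_mono (h : a ≤ b) : (Q.τ a).re ≤ (Q.τ b).re := by
  simpa using Q.re_trace_nonneg (sub_nonneg.mpr h)

lemma re_trace_smul (t : ℝ) (a : M) : (Q.τ ((t : ℂ) • a)).re = t * (Q.τ a).re := by
  simp

lemma eq_zero_of_re_trace_eq_zero (ha : 0 ≤ a) (h : (Q.τ a).re = 0) : a = 0 :=
  Q.faithful a ha (by rw [← Q.ofReal_re_trace ha, h, Complex.ofReal_zero])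

lemma re_trace_le_one (hp : IsProjection p) : (Q.τ p).re ≤ 1 := by
  simpa [Q.normalized] using Q.re_trace_nonneg hp.one_sub.nonneg

lemma re_trace_add_le_one (hp : IsProjection p) (hq : IsProjection q) (h : p * q = 0) :
    (Q.τ p).re + (Q.τ q).re ≤ 1 := by
  simpa using Q.re_trace_le_one (hp.add hq h)

lemma trace_conj_of_isIdempotentElem (hq : IsIdempotentElem q) (a : M) :
    Q.τ (q * a * q) = Q.τ (a * q) := by
  rw [mul_assoc, Q.tracial, mul_assoc, hq.eq]

/-- Both `q (y p) q` and `p (y q) p` have trace `τ(y p q)`, which is therefore squeezed between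
`l τ(pq)` and `b τ(pq)`; so `τ(qpq) = 0`, and faithfulness kills `qpq = (pq)⋆(pq)`. -/
lemma mul_eq_zero_of_separated (Q : QuantumProbabilitySpace M) (hp : IsProjection p)
    (hq : IsProjection q) (hyp : Commute y p) {l b : ℝ} (hbl : b < l)
    (hl : (l : ℂ) • p ≤ y * p) (hb : y * q ≤ (b : ℂ) • q) : p * q = 0 := by
  have hqpq : 0 ≤ q * p * q := by
    simpa [hq.1.star_eq] using star_left_conjugate_nonneg hp.nonneg q
  have trace_qpq : Q.τ (q * p * q) = Q.τ (p * q) := Q.trace_conj_of_isIdempotentElem hq.2 p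
  have trace_yqp : Q.τ (y * q * p) = Q.τ (y * p * q) := by
    rw [Q.tracial, ← mul_assoc, ← hyp.eq]
  have lower : l * (Q.τ (p * q)).re ≤ (Q.τ (y * p * q)).re := by
    have := Q.re_trace_mono (star_left_conjugate_le_conjugate hl q)
    rwa [hq.1.star_eq, Q.trace_conj_of_isIdempotentElem hq.2,
      Q.trace_conj_of_isIdempotentElem hq.2, smul_mul_assoc, re_trace_smul] at this
  have upper : (Q.τ (y * p * q)).re ≤ b * (Q.τ (p * q)).re := by
    have := Q.re_trace_mono (star_left_conjugate_le_conjugate hb p)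
    rwa [hp.1.star_eq, Q.trace_conj_of_isIdempotentElem hp.2,
      Q.trace_conj_of_isIdempotentElem hp.2, smul_mul_assoc, re_trace_smul, trace_yqp,
      Q.tracial q p] at this
  have hzero : q * p * q = 0 := by
    refine Q.eq_zero_of_re_trace_eq_zero hqpq ?_
    have := Q.re_trace_nonneg hqpq
    rw [trace_qpq] at this ⊢
    nlinarith
  rw [← CStarRing.star_mul_self_eq_zero_iff, star_mul, hp.1.star_eq, hq.1.star_eq,
    ← mul_assoc, mul_assoc q, hp.2.eq, hzero]

end QuantumProbabilitySpace

lemma qAbs_eq_cfc_norm {z : M} (hz : IsSelfAdjoint z) : qAbs z = cfc (‖·‖) z :=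
  CFC.abs_eq_cfc_norm z hz

lemma sub_smul_one_eq_cfc {A : Type*} [CStarAlgebra A] {x : A} (hx : IsSelfAdjoint x) (a : ℝ) :
    x - (a : ℂ) • 1 = cfc (· - a) x := by
  rw [cfc_sub .., cfc_id' .., cfc_const a x, Algebra.algebraMap_eq_smul_one, Complex.coe_smul]

lemma isSelfAdjoint_sub_smul_one {A : Type*} [CStarAlgebra A] {x : A} (hx : IsSelfAdjoint x)
    (a : ℝ) : IsSelfAdjoint (x - (a : ℂ) • 1) := by
  rw [sub_smul_one_eq_cfc hx a]
  exact cfc_predicate _ x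

lemma compl_Ioo_eq_Iic_union_Ici (a b : ℝ) : (Ioo a b)ᶜ = Iic a ∪ Ici b := by
  ext t
  simp only [mem_compl_iff, mem_Ioo, not_and_or, not_lt, mem_union, mem_Iic, mem_Ici]

lemma preimage_norm_sub_Ici (a l : ℝ) :
    (fun t : ℝ => ‖t - a‖) ⁻¹' Ici l = (Ioo (a - l) (a + l))ᶜ := by
  ext t
  simp only [mem_preimage, mem_Ici, Real.norm_eq_abs, mem_compl_iff, mem_Ioo, ← not_lt, abs_lt]
  exact not_congr ⟨fun h => ⟨by linarith [h.1], by linarith [h.2]⟩,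
    fun h => ⟨by linarith [h.1], by linarith [h.2]⟩⟩

namespace QuantumProbabilitySpace

variable (Q : QuantumProbabilitySpace M) {x y r : M}

lemma isProjection_specProj (hx : IsSelfAdjoint x) {B : Set ℝ} (hB : MeasurableSet B) :
    IsProjection (Q.specProj x B) :=
  ⟨Q.specProj_isSelfAdjoint x B hx hB, Q.specProj_isIdempotentElem x B hx hB⟩

lemma prob_nonneg (hx : IsSelfAdjoint x) {B : Set ℝ} (hB : MeasurableSet B) :
    0 ≤ Q.prob x B :=
  Q.re_trace_nonneg (Q.isProjection_specProj hx hB).nonneg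

lemma hasSum_prob_iUnion (hx : IsSelfAdjoint x) {B : ℕ → Set ℝ}
    (hB : ∀ n, MeasurableSet (B n)) (hd : Pairwise (Function.onFun Disjoint B)) :
    HasSum (fun n => Q.prob x (B n)) (Q.prob x (⋃ n, B n)) :=
  Complex.hasSum_re (Q.specProj_iUnion x B hx hB hd)

lemma prob_empty (hx : IsSelfAdjoint x) : Q.prob x ∅ = 0 := by
  have h := Q.hasSum_prob_iUnion hx (B := fun _ => ∅) (fun _ => .empty)
    fun _ _ _ => disjoint_bot_left
  rw [iUnion_empty] at h
  exact (summable_const_iff _).mp h.summable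

noncomputable def distribution (hx : IsSelfAdjoint x) : Measure ℝ :=
  Measure.ofMeasurable (fun B _ => ENNReal.ofReal (Q.prob x B))
    (by rw [Q.prob_empty hx, ENNReal.ofReal_zero])
    fun B hB hd => by
      rw [← (Q.hasSum_prob_iUnion hx hB hd).tsum_eq,
        ENNReal.ofReal_tsum_of_nonneg (fun n => Q.prob_nonneg hx (hB n))
          (Q.hasSum_prob_iUnion hx hB hd).summable]

lemma distribution_apply (hx : IsSelfAdjoint x) {B : Set ℝ} (hB : MeasurableSet B) :
    Q.distribution hx B = ENNReal.ofReal (Q.prob x B) :=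
  Measure.ofMeasurable_apply B hB

lemma measureReal_distribution (hx : IsSelfAdjoint x) {B : Set ℝ} (hB : MeasurableSet B) :
    (Q.distribution hx).real B = Q.prob x B := by
  rw [measureReal_def, Q.distribution_apply hx hB, ENNReal.toReal_ofReal (Q.prob_nonneg hx hB)]

lemma prob_univ (hx : IsSelfAdjoint x) : Q.prob x univ = 1 := by
  rw [prob, Q.specProj_univ x hx, Q.normalized, Complex.one_re]

instance (hx : IsSelfAdjoint x) : IsProbabilityMeasure (Q.distribution hx) :=
  ⟨by rw [Q.distribution_apply hx .univ, Q.prob_univ hx, ENNReal.ofReal_one]⟩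

lemma prob_le_one (hx : IsSelfAdjoint x) {B : Set ℝ} (hB : MeasurableSet B) :
    Q.prob x B ≤ 1 := by
  rw [← Q.measureReal_distribution hx hB]
  exact measureReal_le_one

lemma prob_union (hx : IsSelfAdjoint x) {B C : Set ℝ} (hB : MeasurableSet B)
    (hC : MeasurableSet C) (hd : Disjoint B C) :
    Q.prob x (B ∪ C) = Q.prob x B + Q.prob x C := by
  rw [← Q.measureReal_distribution hx (hB.union hC), ← Q.measureReal_distribution hx hB,
    ← Q.measureReal_distribution hx hC, measureReal_union hd hC]

lemma prob_add_prob_compl (hx : IsSelfAdjoint x) {B : Set ℝ} (hB : MeasurableSet B) :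
    Q.prob x B + Q.prob x Bᶜ = 1 := by
  rw [← Q.measureReal_distribution hx hB, ← Q.measureReal_distribution hx hB.compl,
    measureReal_add_measureReal_compl hB, probReal_univ]

lemma prob_iUnion_le (hx : IsSelfAdjoint x) {B : ℕ → Set ℝ} (hB : ∀ n, MeasurableSet (B n))
    (hmono : Monotone B) {c : ℝ} (hc : ∀ n, Q.prob x (B n) ≤ c) :
    Q.prob x (⋃ n, B n) ≤ c := by
  have hc0 : 0 ≤ c := (Q.prob_nonneg hx (hB 0)).trans (hc 0)
  rw [← Q.measureReal_distribution hx (.iUnion hB), measureReal_def]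
  refine ENNReal.toReal_le_of_le_ofReal hc0 ?_
  rw [hmono.measure_iUnion]
  exact iSup_le fun n =>
    (Q.distribution_apply hx (hB n)).trans_le (ENNReal.ofReal_le_ofReal (hc n))

lemma prob_Iio_le_of_forall_lt (hx : IsSelfAdjoint x) {l c : ℝ}
    (h : ∀ b < l, Q.prob x (Iic b) ≤ c) : Q.prob x (Iio l) ≤ c := by
  have hlt (n : ℕ) : l - 1 / (n + 1) < l := sub_lt_self l Nat.one_div_pos_of_nat
  have hlim : Tendsto (fun n : ℕ => l - 1 / (n + 1)) atTop (𝓝 l) := by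
    simpa using tendsto_const_nhds.sub (tendsto_one_div_add_atTop_nhds_zero_nat (𝕜 := ℝ))
  rw [← iUnion_Iic_eq_Iio_of_lt_of_tendsto hlt hlim]
  refine Q.prob_iUnion_le hx (fun _ => measurableSet_Iic) (fun n m hnm => ?_)
    fun n => h _ (hlt n)
  exact Iic_subset_Iic.2 (by gcongr)

lemma prob_Ioi_le_of_forall_gt (hx : IsSelfAdjoint x) {l c : ℝ}
    (h : ∀ b > l, Q.prob x (Ici b) ≤ c) : Q.prob x (Ioi l) ≤ c := by
  have hlt (n : ℕ) : l < l + 1 / (n + 1) := lt_add_of_pos_right l Nat.one_div_pos_of_nat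
  have hlim : Tendsto (fun n : ℕ => l + 1 / (n + 1)) atTop (𝓝 l) := by
    simpa using tendsto_const_nhds.add (tendsto_one_div_add_atTop_nhds_zero_nat (𝕜 := ℝ))
  rw [← iUnion_Ici_eq_Ioi_of_lt_of_tendsto hlt hlim]
  refine Q.prob_iUnion_le hx (fun _ => measurableSet_Ici) (fun n m hnm => ?_)
    fun n => h _ (hlt n)
  exact Ici_subset_Ici.2 (by gcongr)

lemma prob_Ioo_le_of_forall_Icc (hx : IsSelfAdjoint x) {u v c : ℝ}
    (h : ∀ u' v', u < u' → v' < v → Q.prob x (Icc u' v') ≤ c) :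
    Q.prob x (Ioo u v) ≤ c := by
  have hU : ⋃ n : ℕ, Icc (u + 1 / (n + 1)) (v - 1 / (n + 1)) = Ioo u v := by
    ext t
    simp only [mem_iUnion, mem_Icc, mem_Ioo]
    constructor
    · rintro ⟨n, hu, hv⟩
      have : (0 : ℝ) < 1 / (n + 1) := Nat.one_div_pos_of_nat
      constructor <;> linarith
    · rintro ⟨hu, hv⟩
      obtain ⟨n, hn⟩ := exists_nat_one_div_lt (lt_min (sub_pos.2 hu) (sub_pos.2 hv))
      exact ⟨n, by linarith [min_le_left (t - u) (v - t)],
        by linarith [min_le_right (t - u) (v - t)]⟩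
  rw [← hU]
  refine Q.prob_iUnion_le hx (fun _ => measurableSet_Icc) (fun n m hnm => ?_)
    fun n => h _ _ (lt_add_of_pos_right u Nat.one_div_pos_of_nat)
      (sub_lt_self v Nat.one_div_pos_of_nat)
  exact Icc_subset_Icc (by gcongr) (by gcongr)

lemma specProj_empty (hx : IsSelfAdjoint x) : Q.specProj x ∅ = 0 :=
  Q.eq_zero_of_re_trace_eq_zero (Q.isProjection_specProj hx .empty).nonneg (Q.prob_empty hx)

lemma specProj_union (hx : IsSelfAdjoint x) {B C : Set ℝ} (hB : MeasurableSet B)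
    (hC : MeasurableSet C) (hd : Disjoint B C) :
    Q.specProj x (B ∪ C) = Q.specProj x B + Q.specProj x C := by
  have hp := Q.isProjection_specProj hx hB
  have hq := Q.isProjection_specProj hx hC
  have hpq : Q.specProj x B * Q.specProj x C = 0 := by
    rw [← Q.specProj_inter x B C hx hB hC, hd.inter_eq, Q.specProj_empty hx]
  have hsub : Q.specProj x (B ∪ C) * (Q.specProj x B + Q.specProj x C) =
      Q.specProj x B + Q.specProj x C := by
    rw [mul_add, ← Q.specProj_inter x _ _ hx (hB.union hC) hB,
      ← Q.specProj_inter x _ _ hx (hB.union hC) hC, union_inter_cancel_left,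
      union_inter_cancel_right]
  have hdiff := (Q.isProjection_specProj hx (hB.union hC)).sub_of_mul_eq (hp.add hq hpq) hsub
  refine (sub_eq_zero.mp (Q.eq_zero_of_re_trace_eq_zero hdiff.nonneg ?_))
  rw [map_sub, map_add, Complex.sub_re, Complex.add_re]
  have := Q.prob_union hx hB hC hd
  simp only [prob] at this
  linarith

lemma commute_specProj_specProj (hx : IsSelfAdjoint x) {B C : Set ℝ} (hB : MeasurableSet B)
    (hC : MeasurableSet C) : Commute (Q.specProj x B) (Q.specProj x C) := by
  rw [Commute, SemiconjBy, ← Q.specProj_inter x B C hx hB hC,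
    ← Q.specProj_inter x C B hx hC hB, inter_comm]

lemma mul_specProj_Iic_le (hx : IsSelfAdjoint x) (t : ℝ) :
    x * Q.specProj x (Iic t) ≤ (t : ℂ) • Q.specProj x (Iic t) := by
  have h : Q.specProj x (Iic t) * x * Q.specProj x (Iic t) = x * Q.specProj x (Iic t) := by
    rw [← (Q.specProj_commute _ _ hx measurableSet_Iic).eq, mul_assoc,
      (Q.specProj_isIdempotentElem x _ hx measurableSet_Iic).eq]
  exact h ▸ Q.specProj_le x t hx

lemma smul_specProj_Ici_le (hx : IsSelfAdjoint x) (t : ℝ) :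
    (t : ℂ) • Q.specProj x (Ici t) ≤ x * Q.specProj x (Ici t) := by
  have h : Q.specProj x (Ici t) * x * Q.specProj x (Ici t) = x * Q.specProj x (Ici t) := by
    rw [← (Q.specProj_commute _ _ hx measurableSet_Ici).eq, mul_assoc,
      (Q.specProj_isIdempotentElem x _ hx measurableSet_Ici).eq]
  exact h ▸ Q.specProj_ge x t hx

lemma specProj_Icc (hx : IsSelfAdjoint x) (u v : ℝ) :
    Q.specProj x (Icc u v) = Q.specProj x (Ici u) * Q.specProj x (Iic v) := by
  rw [← Ici_inter_Iic, Q.specProj_inter x _ _ hx measurableSet_Ici measurableSet_Iic]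

lemma smul_specProj_Icc_le (hx : IsSelfAdjoint x) (u v : ℝ) :
    (u : ℂ) • Q.specProj x (Icc u v) ≤ x * Q.specProj x (Icc u v) := by
  have hc : Commute (Q.specProj x (Ici u)) (Q.specProj x (Iic v)) :=
    Q.commute_specProj_specProj hx measurableSet_Ici measurableSet_Iic
  rw [Q.specProj_Icc hx, ← smul_mul_assoc, ← mul_assoc]
  exact mul_le_mul_right_of_commute (Q.smul_specProj_Ici_le hx u)
    (Q.isProjection_specProj hx measurableSet_Iic).nonneg (hc.smul_left _)
    ((Q.specProj_commute _ _ hx measurableSet_Iic).mul_left hc)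

lemma mul_specProj_Icc_le (hx : IsSelfAdjoint x) (u v : ℝ) :
    x * Q.specProj x (Icc u v) ≤ (v : ℂ) • Q.specProj x (Icc u v) := by
  have hc : Commute (Q.specProj x (Iic v)) (Q.specProj x (Ici u)) :=
    Q.commute_specProj_specProj hx measurableSet_Iic measurableSet_Ici
  rw [Q.specProj_Icc hx, ← hc.eq, ← smul_mul_assoc, ← mul_assoc]
  exact mul_le_mul_right_of_commute (Q.mul_specProj_Iic_le hx v)
    (Q.isProjection_specProj hx measurableSet_Ici).nonneg
    ((Q.specProj_commute _ _ hx measurableSet_Ici).mul_left hc) (hc.smul_left _)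

lemma specProj_sub_smul_one (hx : IsSelfAdjoint x) (a : ℝ) {B : Set ℝ}
    (hB : MeasurableSet B) :
    Q.specProj (x - (a : ℂ) • 1) B = Q.specProj x ((· - a) ⁻¹' B) := by
  rw [sub_smul_one_eq_cfc hx a]
  exact Q.specProj_cfc x _ B hx (continuous_sub_right a) hB

lemma specProj_qAbs (hy : IsSelfAdjoint y) (l : ℝ) :
    Q.specProj (qAbs y) (Ici l) = Q.specProj y (Ioo (-l) l)ᶜ := by
  rw [qAbs_eq_cfc_norm hy, Q.specProj_cfc y _ _ hy continuous_norm measurableSet_Ici]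
  simpa using congrArg (Q.specProj y) (preimage_norm_sub_Ici 0 l)

lemma prob_qAbs (hy : IsSelfAdjoint y) (l : ℝ) :
    Q.prob (qAbs y) (Ici l) = Q.prob y (Ioo (-l) l)ᶜ := by
  rw [prob, Q.specProj_qAbs hy, prob]

lemma prob_qAbs_sub_smul_one (hx : IsSelfAdjoint x) (a l : ℝ) :
    Q.prob (qAbs (x - (a : ℂ) • 1)) (Ici l) = Q.prob x (Ioo (a - l) (a + l))ᶜ := by
  rw [Q.prob_qAbs (isSelfAdjoint_sub_smul_one hx a), prob,
    Q.specProj_sub_smul_one hx a measurableSet_Ioo.compl, preimage_compl, preimage_sub_const_Ioo,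
    neg_add_eq_sub, add_comm l a, prob]

lemma re_trace_le_prob_Ici (hy : IsSelfAdjoint y) (hr : IsProjection r) (hyr : Commute y r)
    {l : ℝ} (h : (l : ℂ) • r ≤ y * r) : (Q.τ r).re ≤ Q.prob y (Ici l) := by
  have hIio : Q.prob y (Iio l) ≤ 1 - (Q.τ r).re := by
    refine Q.prob_Iio_le_of_forall_lt hy fun b hb => ?_
    have hE := Q.isProjection_specProj hy (measurableSet_Iic (a := b))
    have := Q.re_trace_add_le_one hr hE
      (Q.mul_eq_zero_of_separated hr hE hyr hb h (Q.mul_specProj_Iic_le hy b))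
    rw [prob]
    linarith
  have := Q.prob_add_prob_compl hy (measurableSet_Iio (a := l))
  rw [compl_Iio] at this
  linarith

lemma re_trace_le_prob_Iic (hy : IsSelfAdjoint y) (hr : IsProjection r) {l : ℝ}
    (h : y * r ≤ (l : ℂ) • r) : (Q.τ r).re ≤ Q.prob y (Iic l) := by
  have hIoi : Q.prob y (Ioi l) ≤ 1 - (Q.τ r).re := by
    refine Q.prob_Ioi_le_of_forall_gt hy fun b hb => ?_
    have hE := Q.isProjection_specProj hy (measurableSet_Ici (a := b))
    have := Q.re_trace_add_le_one hE hr (Q.mul_eq_zero_of_separated hE hr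
      (Q.specProj_commute _ _ hy measurableSet_Ici) hb (Q.smul_specProj_Ici_le hy b) h)
    rw [prob]
    linarith
  have := Q.prob_add_prob_compl hy (measurableSet_Iic (a := l))
  rw [compl_Iic] at this
  linarith

end QuantumProbabilitySpace

namespace QuantumProbabilitySpace.IsTensorSquare

variable {Q : QuantumProbabilitySpace M} {R : QuantumProbabilitySpace N}
  {i1 i2 : M →⋆ₐ[ℂ] N} {x P P' : M}

lemma isProjection_mul (hts : Q.IsTensorSquare R i1 i2) (hP : IsProjection P)
    (hP' : IsProjection P') : IsProjection (i1 P * i2 P') :=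
  (hP.map i1).mul_of_commute (hP'.map i2) (hts.commutes P P')

lemma re_trace_mul (hts : Q.IsTensorSquare R i1 i2) (hP : 0 ≤ P) (hP' : 0 ≤ P') :
    (R.τ (i1 P * i2 P')).re = (Q.τ P).re * (Q.τ P').re := by
  rw [hts.trace_mul, Complex.mul_re, (Q.pos P hP).2, (Q.pos P' hP').2, mul_zero, sub_zero]

lemma commute_sub_mul (hts : Q.IsTensorSquare R i1 i2) (hxP : Commute x P)
    (hxP' : Commute x P') : Commute (i1 x - i2 x) (i1 P * i2 P') :=
  ((hxP.map i1).mul_right (hts.commutes x P')).sub_left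
    ((hts.commutes P x).symm.mul_right (hxP'.map i2))

lemma sub_mul_mul_eq (hts : Q.IsTensorSquare R i1 i2) :
    (i1 x - i2 x) * (i1 P * i2 P') = i1 (x * P) * i2 P' - i1 P * i2 (x * P') := by
  rw [sub_mul, map_mul, map_mul, ← mul_assoc, ← mul_assoc, ← (hts.commutes P x).eq, mul_assoc,
    mul_assoc]

lemma map_mul_map_le_left (hts : Q.IsTensorSquare R i1 i2) {a b : M} (h : a ≤ b)
    (hP' : 0 ≤ P') : i1 a * i2 P' ≤ i1 b * i2 P' :=
  mul_le_mul_right_of_commute (OrderHomClass.mono i1 h) (map_nonneg i2 hP') (hts.commutes a P')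
    (hts.commutes b P')

lemma map_mul_map_le_right (hts : Q.IsTensorSquare R i1 i2) {a b : M} (h : a ≤ b)
    (hP : 0 ≤ P) : i1 P * i2 a ≤ i1 P * i2 b := by
  rw [(hts.commutes P a).eq, (hts.commutes P b).eq]
  exact mul_le_mul_right_of_commute (OrderHomClass.mono i2 h) (map_nonneg i1 hP)
    (hts.commutes P a).symm (hts.commutes P b).symm

lemma smul_le_sub_mul (hts : Q.IsTensorSquare R i1 i2) (hP : 0 ≤ P) (hP' : 0 ≤ P') {s t : ℝ}
    (hs : (s : ℂ) • P ≤ x * P) (ht : x * P' ≤ (t : ℂ) • P') :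
    ((s - t : ℝ) : ℂ) • (i1 P * i2 P') ≤ (i1 x - i2 x) * (i1 P * i2 P') := by
  rw [hts.sub_mul_mul_eq]
  calc ((s - t : ℝ) : ℂ) • (i1 P * i2 P')
        = i1 ((s : ℂ) • P) * i2 P' - i1 P * i2 ((t : ℂ) • P') := by
        rw [map_smul, map_smul, smul_mul_assoc, mul_smul_comm, Complex.ofReal_sub, sub_smul]
    _ ≤ _ := sub_le_sub (hts.map_mul_map_le_left hs hP') (hts.map_mul_map_le_right ht hP)

lemma sub_mul_le_smul (hts : Q.IsTensorSquare R i1 i2) (hP : 0 ≤ P) (hP' : 0 ≤ P') {s t : ℝ}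
    (hs : x * P ≤ (s : ℂ) • P) (ht : (t : ℂ) • P' ≤ x * P') :
    (i1 x - i2 x) * (i1 P * i2 P') ≤ ((s - t : ℝ) : ℂ) • (i1 P * i2 P') := by
  rw [hts.sub_mul_mul_eq]
  calc _ ≤ i1 ((s : ℂ) • P) * i2 P' - i1 P * i2 ((t : ℂ) • P') :=
        sub_le_sub (hts.map_mul_map_le_left hs hP') (hts.map_mul_map_le_right ht hP)
    _ = ((s - t : ℝ) : ℂ) • (i1 P * i2 P') := by
        rw [map_smul, map_smul, smul_mul_assoc, mul_smul_comm, Complex.ofReal_sub, sub_smul]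

lemma prob_Ici_mul_prob_Iic_le (hts : Q.IsTensorSquare R i1 i2) (hx : IsSelfAdjoint x)
    (s t : ℝ) : Q.prob x (Ici s) * Q.prob x (Iic t) ≤ R.prob (i1 x - i2 x) (Ici (s - t)) := by
  have hP := Q.isProjection_specProj hx (measurableSet_Ici (a := s))
  have hP' := Q.isProjection_specProj hx (measurableSet_Iic (a := t))
  rw [prob, prob, ← hts.re_trace_mul hP.nonneg hP'.nonneg]
  exact R.re_trace_le_prob_Ici ((hx.map i1).sub (hx.map i2)) (hts.isProjection_mul hP hP')
    (hts.commute_sub_mul (Q.specProj_commute _ _ hx measurableSet_Ici)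
      (Q.specProj_commute _ _ hx measurableSet_Iic))
    (hts.smul_le_sub_mul hP.nonneg hP'.nonneg (Q.smul_specProj_Ici_le hx s)
      (Q.mul_specProj_Iic_le hx t))

lemma prob_Iic_mul_prob_Ici_le (hts : Q.IsTensorSquare R i1 i2) (hx : IsSelfAdjoint x)
    (s t : ℝ) : Q.prob x (Iic s) * Q.prob x (Ici t) ≤ R.prob (i1 x - i2 x) (Iic (s - t)) := by
  have hP := Q.isProjection_specProj hx (measurableSet_Iic (a := s))
  have hP' := Q.isProjection_specProj hx (measurableSet_Ici (a := t))
  rw [prob, prob, ← hts.re_trace_mul hP.nonneg hP'.nonneg]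
  exact R.re_trace_le_prob_Iic ((hx.map i1).sub (hx.map i2)) (hts.isProjection_mul hP hP')
    (hts.sub_mul_le_smul hP.nonneg hP'.nonneg (Q.mul_specProj_Iic_le hx s)
      (Q.smul_specProj_Ici_le hx t))

lemma prob_qAbs_sub_le_two_mul (hts : Q.IsTensorSquare R i1 i2) (hx : IsSelfAdjoint x)
    {m : ℝ} (hm : Q.IsMedian x m) (l : ℝ) :
    Q.prob (qAbs (x - (m : ℂ) • 1)) (Ici l) ≤ 2 * R.prob (qAbs (i1 x - i2 x)) (Ici l) := by
  have hy : IsSelfAdjoint (i1 x - i2 x) := (hx.map i1).sub (hx.map i2)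
  rw [Q.prob_qAbs_sub_smul_one hx, R.prob_qAbs hy]
  rcases le_or_gt l 0 with hl | hl
  · rw [Ioo_eq_empty (show ¬-l < l by linarith), compl_empty, R.prob_univ hy]
    linarith [Q.prob_le_one hx (measurableSet_Ioo (a := m - l) (b := m + l)).compl]
  rw [compl_Ioo_eq_Iic_union_Ici, compl_Ioo_eq_Iic_union_Ici,
    Q.prob_union hx measurableSet_Iic measurableSet_Ici (Iic_disjoint_Ici.2 (by linarith)),
    R.prob_union hy measurableSet_Iic measurableSet_Ici (Iic_disjoint_Ici.2 (by linarith))]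
  have hplus := hts.prob_Ici_mul_prob_Iic_le hx (m + l) m
  have hminus := hts.prob_Iic_mul_prob_Ici_le hx (m - l) m
  rw [add_sub_cancel_left] at hplus
  rw [sub_sub_cancel_left] at hminus
  nlinarith [hm.1, hm.2, Q.prob_nonneg hx (measurableSet_Ici (a := m + l)),
    Q.prob_nonneg hx (measurableSet_Iic (a := m - l))]

lemma prob_qAbs_add_sq_prob_Icc_le_one (hts : Q.IsTensorSquare R i1 i2) (hx : IsSelfAdjoint x)
    {u v l : ℝ} (hl : 0 < l) (huv : v - u < l) :
    R.prob (qAbs (i1 x - i2 x)) (Ici l) + Q.prob x (Icc u v) ^ 2 ≤ 1 := by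
  have hy : IsSelfAdjoint (i1 x - i2 x) := (hx.map i1).sub (hx.map i2)
  have hc := Q.isProjection_specProj hx (measurableSet_Icc (a := u) (b := v))
  have hg := hts.isProjection_mul hc hc
  have hplus := R.isProjection_specProj hy (measurableSet_Ici (a := l))
  have hminus := R.isProjection_specProj hy (measurableSet_Iic (a := -l))
  have upper := hts.sub_mul_le_smul hc.nonneg hc.nonneg (Q.mul_specProj_Icc_le hx u v)
    (Q.smul_specProj_Icc_le hx u v)
  have lower := hts.smul_le_sub_mul hc.nonneg hc.nonneg (Q.smul_specProj_Icc_le hx u v)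
    (Q.mul_specProj_Icc_le hx u v)
  have hplus_g := R.mul_eq_zero_of_separated hplus hg
    (R.specProj_commute _ _ hy measurableSet_Ici) huv (R.smul_specProj_Ici_le hy l) upper
  have hg_minus := R.mul_eq_zero_of_separated hg hminus
    (hts.commute_sub_mul (Q.specProj_commute _ _ hx measurableSet_Icc)
      (Q.specProj_commute _ _ hx measurableSet_Icc)) (by linarith) lower
    (R.mul_specProj_Iic_le hy (-l))
  have hF : R.specProj (i1 x - i2 x) (Ioo (-l) l)ᶜ * (i1 (Q.specProj x (Icc u v)) *
      i2 (Q.specProj x (Icc u v))) = 0 := by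
    rw [compl_Ioo_eq_Iic_union_Ici, R.specProj_union hy measurableSet_Iic measurableSet_Ici
      (Iic_disjoint_Ici.2 (by linarith)), add_mul, hg.mul_eq_zero_symm hminus hg_minus, hplus_g,
      add_zero]
  have := R.re_trace_add_le_one (R.isProjection_specProj hy measurableSet_Ioo.compl) hg hF
  rwa [hts.re_trace_mul hc.nonneg hc.nonneg, ← prob, ← R.prob_qAbs hy, ← sq] at this

lemma prob_qAbs_le_two_mul (hts : Q.IsTensorSquare R i1 i2) (hx : IsSelfAdjoint x) (a l : ℝ) :
    R.prob (qAbs (i1 x - i2 x)) (Ici l) ≤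
      2 * Q.prob (qAbs (x - (a : ℂ) • 1)) (Ici (l / 2)) := by
  have hy : IsSelfAdjoint (i1 x - i2 x) := (hx.map i1).sub (hx.map i2)
  rw [Q.prob_qAbs_sub_smul_one hx]
  rcases le_or_gt l 0 with hl | hl
  · rw [Ioo_eq_empty (by linarith), compl_empty, Q.prob_univ hx, R.prob_qAbs hy]
    linarith [R.prob_le_one hy (measurableSet_Ioo (a := -l) (b := l)).compl]
  have hIoo : Q.prob x (Ioo (a - l / 2) (a + l / 2)) ≤
      1 - R.prob (qAbs (i1 x - i2 x)) (Ici l) / 2 := by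
    refine Q.prob_Ioo_le_of_forall_Icc hx fun u v hu hv => ?_
    have := hts.prob_qAbs_add_sq_prob_Icc_le_one hx hl (u := u) (v := v) (by linarith)
    nlinarith [Q.prob_nonneg hx (measurableSet_Icc (a := u) (b := v)),
      Q.prob_le_one hx (measurableSet_Icc (a := u) (b := v))]
  linarith [Q.prob_add_prob_compl hx (measurableSet_Ioo (a := a - l / 2) (b := a + l / 2))]

end QuantumProbabilitySpace.IsTensorSquare

end

/-- **Noncommutative weak symmetrization inequality**: if `m` is a median of the
self-adjoint `x` and `x̂ = x ⊗ 1 - 1 ⊗ x`, then for every `λ ∈ ℝ` and `α ∈ ℝ`,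
`τ(e_λ^⊥(|x - m|)) ≤ 2 (τ ⊗ τ)(e_λ^⊥(|x̂|)) ≤ 4 τ(e_{λ/2}^⊥(|x - α|))`; in particular
(taking `α = m`), `τ(e_λ^⊥(|x - m|)) ≤ 2 (τ ⊗ τ)(e_λ^⊥(|x̂|)) ≤ 4 τ(e_{λ/2}^⊥(|x - m|))`. -/
theorem noncommutative_weak_symmetrization {M N : Type*}
    [CStarAlgebra M] [PartialOrder M] [StarOrderedRing M]
    [CStarAlgebra N] [PartialOrder N] [StarOrderedRing N]
    (Q : QuantumProbabilitySpace M) (R : QuantumProbabilitySpace N)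
    (i1 i2 : M →⋆ₐ[ℂ] N) (hts : Q.IsTensorSquare R i1 i2)
    (x : M) (hx : IsSelfAdjoint x) (m : ℝ) (hm : Q.IsMedian x m) (l : ℝ) :
    Q.prob (qAbs (x - (m : ℂ) • 1)) (Set.Ici l) ≤
        2 * R.prob (qAbs (i1 x - i2 x)) (Set.Ici l) ∧
      (∀ a : ℝ, 2 * R.prob (qAbs (i1 x - i2 x)) (Set.Ici l) ≤
        4 * Q.prob (qAbs (x - (a : ℂ) • 1)) (Set.Ici (l / 2))) ∧
      2 * R.prob (qAbs (i1 x - i2 x)) (Set.Ici l) ≤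
        4 * Q.prob (qAbs (x - (m : ℂ) • 1)) (Set.Ici (l / 2)) :=
  ⟨hts.prob_qAbs_sub_le_two_mul hx hm l,
    fun a => by linarith [hts.prob_qAbs_le_two_mul hx a l],
    by linarith [hts.prob_qAbs_le_two_mul hx m l]⟩
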